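/- arXiv:2402.09714 — 4 statements merged into one kernel-verified Lean document; each statement's English description precedes it below -/
import Mathlib

section
/- Let W ∈ ℝ^{n×n} be symmetric, positive semidefinite, doubly stochastic with λ := ‖W − (1/n)𝟙𝟙ᵀ‖₂ < 1. Define η_w := 1/(1+√(1−λ²)), ρ̃_w := √η_w, Π := I_n − (1/n)𝟙𝟙ᵀ, Π̃ := diag(Π, Π) ∈ ℝ^{2n×2n}, and W̃ := [[(1+η_w)W, −η_w I_n], [I_n, 0]] ∈ ℝ^{2n×2n}. Then for every matrix A ∈ ℝ^{n×p} and every integer k ≥ 0, ‖Π̃ W̃^k Π̃ A_#‖² ≤ 14 · ρ̃_w^{2k} · ‖Π A‖², where A_# := (A; A) ∈ ℝ^{2n×p} stacks two copies of A and ‖·‖ denotes the Frobenius norm. -/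
/-!
After projecting with `Π`, the iterates `Π̃ W̃ᵏ Π̃ A_#` stack two consecutive terms of the matrix
recursion `X_{k+2} = (1 + η) W X_{k+1} - η X_k`, `X_0 = X_1 = Π A`. On the range of `Π` the matrix
`W` acts as `W - 𝟙𝟙ᵀ/n = Πᵀ W Π`, which is positive semidefinite with spectral norm `λ`; so in an
orthonormal eigenbasis of it the recursion splits into scalar recursions with eigenvalues
`μ ∈ [0, λ]`. Each of them preserves, up to a factor `η` per step, the quadratic form
`a² - (1 + η) μ a b + η b²` in `(x_{k+1}, x_k)`, which is positive definite for `μ ≤ λ`, and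
comparing it with `a² + b²` gives the constant `14`.
-/

open Matrix Finset

noncomputable section

/-- Spectral norm (ℓ₂ operator norm) of a real matrix. -/
def specNorm {m : Type*} [Fintype m] [DecidableEq m] (M : Matrix m m ℝ) : ℝ :=
  ‖LinearMap.toContinuousLinearMap (Matrix.toEuclideanLin M)‖

/-- Squared Frobenius norm of a real matrix. -/
def froSq {m q : Type*} [Fintype m] [Fintype q] (M : Matrix m q ℝ) : ℝ :=
  ∑ i, ∑ j, (M i j) ^ 2

/-- The matrix (1/n) 𝟙𝟙ᵀ with all entries 1/n. -/
def avgMatrix (n : ℕ) : Matrix (Fin n) (Fin n) ℝ := Matrix.of fun _ _ => (n : ℝ)⁻¹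

section Scalar

theorem two_step_invariant {R : Type*} [CommRing R] (c η : R) (x : ℕ → R)
    (hrec : ∀ k, x (k + 2) = c * x (k + 1) - η * x k) (k : ℕ) :
    x (k + 1) ^ 2 - c * x (k + 1) * x k + η * x k ^ 2
      = η ^ k * (x 1 ^ 2 - c * x 1 * x 0 + η * x 0 ^ 2) := by
  induction k with
  | zero => ring
  | succ k ih =>
    rw [hrec k, pow_succ]
    linear_combination η * ih

theorem mul_sq_add_sq_le_quadForm (a b c η : ℝ) :
    (4 * η - c ^ 2) * (a ^ 2 + b ^ 2) ≤ 4 * (1 + η) * (a ^ 2 - c * a * b + η * b ^ 2) := by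
  nlinarith [sq_nonneg (c * a - 2 * η * b), sq_nonneg (2 * a - c * b)]

theorem lca_constant_of_sq_add_sq_eq_one {s lam μ : ℝ} (hs : 0 < s) (hslam : s ^ 2 + lam ^ 2 = 1)
    (hμ0 : 0 ≤ μ) (hμ : μ ≤ lam) :
    0 < 4 * (1 + s) - (2 + s) ^ 2 * μ ^ 2 ∧
      4 * (2 + s) ^ 2 * (1 - μ) ≤ 14 * (4 * (1 + s) - (2 + s) ^ 2 * μ ^ 2) := by
  have hlam1 : lam ≤ 1 := by nlinarith
  have hs1 : s ≤ 1 := by nlinarith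
  have hμ2 : μ ^ 2 ≤ lam ^ 2 := by nlinarith
  constructor
  · nlinarith [mul_le_mul_of_nonneg_left hμ2 (sq_nonneg (2 + s))]
  · -- the right side minus the left is concave in `μ`, and nonnegative at `μ = 0` and `μ = lam`
    have h1lam : 1 - lam ≤ s ^ 2 := by nlinarith
    nlinarith [mul_nonneg (mul_nonneg hμ0 (sub_nonneg.2 hμ)) (sq_nonneg (2 + s))]

theorem lca_constant {lam η μ : ℝ} (hlam1 : lam < 1) (hη : η = 1 / (1 + √(1 - lam ^ 2)))
    (hμ0 : 0 ≤ μ) (hμ : μ ≤ lam) :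
    0 < 4 * η - ((1 + η) * μ) ^ 2 ∧
      4 * (1 + η) ^ 2 * (1 - μ) ≤ 14 * (4 * η - ((1 + η) * μ) ^ 2) := by
  set s := √(1 - lam ^ 2)
  have hs : 0 < s := Real.sqrt_pos.2 (by nlinarith)
  have hslam : s ^ 2 + lam ^ 2 = 1 := by rw [Real.sq_sqrt (by nlinarith)]; ring
  have hη0 : 0 < η := by rw [hη]; positivity
  have hηs : η * (1 + s) = 1 := by rw [hη]; field_simp
  have h1 : 4 * η - ((1 + η) * μ) ^ 2 = η ^ 2 * (4 * (1 + s) - (2 + s) ^ 2 * μ ^ 2) := by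
    linear_combination (μ ^ 2 * (1 + 3 * η + η * s) - 4 * η) * hηs
  have h2 : 4 * (1 + η) ^ 2 * (1 - μ) = η ^ 2 * (4 * (2 + s) ^ 2 * (1 - μ)) := by
    linear_combination -4 * (1 - μ) * (1 + 3 * η + η * s) * hηs
  obtain ⟨hpos, hle⟩ := lca_constant_of_sq_add_sq_eq_one hs hslam hμ0 hμ
  rw [h1, h2]
  exact ⟨by positivity, by nlinarith [sq_nonneg η]⟩

theorem lca_scalar_bound {lam η μ : ℝ} (hlam1 : lam < 1) (hη : η = 1 / (1 + √(1 - lam ^ 2)))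
    (hμ0 : 0 ≤ μ) (hμ : μ ≤ lam) (x : ℕ → ℝ) (hx : x 1 = x 0)
    (hrec : ∀ k, x (k + 2) = (1 + η) * μ * x (k + 1) - η * x k) (k : ℕ) :
    x (k + 1) ^ 2 + x k ^ 2 ≤ 14 * η ^ k * x 0 ^ 2 := by
  obtain ⟨hpos, hconst⟩ := lca_constant hlam1 hη hμ0 hμ
  have hinv := two_step_invariant _ _ x hrec k
  rw [hx] at hinv
  refine le_of_mul_le_mul_left ?_ hpos
  calc (4 * η - ((1 + η) * μ) ^ 2) * (x (k + 1) ^ 2 + x k ^ 2)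
      ≤ 4 * (1 + η) * (η ^ k * ((1 + η) * (1 - μ) * x 0 ^ 2)) := by
        convert mul_sq_add_sq_le_quadForm (x (k + 1)) (x k) ((1 + η) * μ) η using 2
        rw [hinv]; ring
    _ = η ^ k * x 0 ^ 2 * (4 * (1 + η) ^ 2 * (1 - μ)) := by ring
    _ ≤ η ^ k * x 0 ^ 2 * (14 * (4 * η - ((1 + η) * μ) ^ 2)) := by
        have hη0 : 0 ≤ η := by rw [hη]; positivity
        gcongr
    _ = (4 * η - ((1 + η) * μ) ^ 2) * (14 * η ^ k * x 0 ^ 2) := by ring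

end Scalar

section LcaSeq

variable {R m q : Type*} [CommRing R] [Fintype m]

def lcaSeq (M : Matrix m m R) (η : R) (Y : Matrix m q R) : ℕ → Matrix m q R
  | 0 => Y
  | 1 => Y
  | k + 2 => (1 + η) • (M * lcaSeq M η Y (k + 1)) - η • lcaSeq M η Y k

def lcaBlock [DecidableEq m] (M : Matrix m m R) (η : R) : Matrix (m ⊕ m) (m ⊕ m) R :=
  fromBlocks ((1 + η) • M) ((-η) • 1) 1 0

variable (M : Matrix m m R) (η : R) (Y : Matrix m q R)

theorem lcaSeq_add_two (k : ℕ) :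
    lcaSeq M η Y (k + 2) = (1 + η) • (M * lcaSeq M η Y (k + 1)) - η • lcaSeq M η Y k := rfl

theorem mul_lcaSeq_of_mul_eq {N V : Matrix m m R} (hV : V * M = N * V) (k : ℕ) :
    V * lcaSeq M η Y k = lcaSeq N η (V * Y) k := by
  induction k using Nat.strong_induction_on with
  | _ k ih =>
    match k, ih with
    | 0, _ => rfl
    | 1, _ => rfl
    | k + 2, ih =>
      rw [lcaSeq_add_two, lcaSeq_add_two, Matrix.mul_sub, Matrix.mul_smul, Matrix.mul_smul,
        ← Matrix.mul_assoc, hV, Matrix.mul_assoc, ih k (by omega), ih (k + 1) (by omega)]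

theorem lcaSeq_eq_of_mul_eq {M' P : Matrix m m R} (hM : M * P = M' * P) (hP : Commute P M)
    (k : ℕ) : lcaSeq M η (P * Y) k = lcaSeq M' η (P * Y) k := by
  induction k using Nat.strong_induction_on with
  | _ k ih =>
    match k, ih with
    | 0, _ => rfl
    | 1, _ => rfl
    | k + 2, ih =>
      rw [lcaSeq_add_two, lcaSeq_add_two, ← ih (k + 1) (by omega), ← ih k (by omega),
        ← mul_lcaSeq_of_mul_eq M η Y hP.eq, ← Matrix.mul_assoc, hM, Matrix.mul_assoc]

theorem lcaSeq_diagonal_apply_add_two [DecidableEq m] (d : m → R) (i : m) (j : q) (k : ℕ) :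
    lcaSeq (diagonal d) η Y (k + 2) i j
      = (1 + η) * d i * lcaSeq (diagonal d) η Y (k + 1) i j
        - η * lcaSeq (diagonal d) η Y k i j := by
  simp [lcaSeq_add_two, mul_assoc]

theorem lcaBlock_pow_mul_fromRows [DecidableEq m] (k : ℕ) :
    lcaBlock M η ^ k * fromRows Y Y = fromRows (lcaSeq M η Y (k + 1)) (lcaSeq M η Y k) := by
  induction k with
  | zero => rw [pow_zero, Matrix.one_mul]; rfl
  | succ k ih =>
    rw [pow_succ', Matrix.mul_assoc, ih, lcaBlock, fromBlocks_mul_fromRows, lcaSeq_add_two]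
    simp [sub_eq_add_neg]

theorem fromBlocks_mul_lcaBlock_pow_mul_fromBlocks_mul_fromRows [DecidableEq m]
    {P : Matrix m m R} (hP : IsIdempotentElem P) (hPM : Commute P M) (k : ℕ) :
    fromBlocks P 0 0 P * lcaBlock M η ^ k * fromBlocks P 0 0 P * fromRows Y Y
      = fromRows (lcaSeq M η (P * Y) (k + 1)) (lcaSeq M η (P * Y) k) := by
  have hPX : ∀ j, P * lcaSeq M η (P * Y) j = lcaSeq M η (P * Y) j := fun j => by
    rw [mul_lcaSeq_of_mul_eq M η _ hPM.eq, ← Matrix.mul_assoc, hP.eq]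
  have hPY : fromBlocks P 0 0 P * fromRows Y Y = fromRows (P * Y) (P * Y) := by
    simp [fromBlocks_mul_fromRows]
  rw [Matrix.mul_assoc, Matrix.mul_assoc, hPY, lcaBlock_pow_mul_fromRows, fromBlocks_mul_fromRows]
  simp [hPX]

end LcaSeq

section FroSq

variable {m q : Type*} [Fintype m] [Fintype q]

theorem froSq_eq_trace (M : Matrix m q ℝ) : froSq M = trace (Mᵀ * M) := by
  rw [froSq, trace, Finset.sum_comm]
  simp [Matrix.mul_apply, pow_two]

theorem froSq_mul_of_transpose_mul_self [DecidableEq m] {V : Matrix m m ℝ} (hV : Vᵀ * V = 1)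
    (M : Matrix m q ℝ) : froSq (V * M) = froSq M := by
  rw [froSq_eq_trace, froSq_eq_trace, transpose_mul, Matrix.mul_assoc, ← Matrix.mul_assoc Vᵀ,
    hV, Matrix.one_mul]

theorem froSq_fromRows {m' : Type*} [Fintype m'] (M : Matrix m q ℝ) (M' : Matrix m' q ℝ) :
    froSq (fromRows M M') = froSq M + froSq M' := by
  simp only [froSq, Fintype.sum_sum_type, fromRows_apply_inl, fromRows_apply_inr]

end FroSq

theorem Matrix.IsHermitian.eigenvalues_le_specNorm {m : Type*} [Fintype m] [DecidableEq m]
    {A : Matrix m m ℝ} (hA : A.IsHermitian) (i : m) : hA.eigenvalues i ≤ specNorm A := by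
  set v := hA.eigenvectorBasis i
  have hv : ‖v‖ = 1 := hA.eigenvectorBasis.orthonormal.1 i
  have hAv : toEuclideanLin A v = hA.eigenvalues i • v := by
    ext j
    simpa using congrFun (hA.mulVec_eigenvectorBasis i) j
  have := (LinearMap.toContinuousLinearMap (toEuclideanLin A)).le_opNorm v
  rw [LinearMap.coe_toContinuousLinearMap', hAv, norm_smul, hv, mul_one, mul_one] at this
  exact (Real.le_norm_self _).trans this

theorem Matrix.IsHermitian.exists_orthogonal_mul_eq_diagonal_mul {m : Type*} [Fintype m]
    [DecidableEq m] {M : Matrix m m ℝ} (hM : M.IsHermitian) :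
    ∃ V : Matrix m m ℝ, Vᵀ * V = 1 ∧ V * M = diagonal hM.eigenvalues * V := by
  set U : Matrix m m ℝ := ↑hM.eigenvectorUnitary
  refine ⟨star U, ?_, ?_⟩
  · rw [← conjTranspose_eq_transpose_of_trivial, ← star_eq_conjTranspose, star_star]
    exact Unitary.mul_star_self_of_mem hM.eigenvectorUnitary.2
  · have h := hM.spectral_theorem
    rw [Unitary.conjStarAlgAut_apply] at h
    conv_lhs => rw [h]
    simp [U, ← Matrix.mul_assoc]

theorem froSq_lcaSeq_le {m q : Type*} [Fintype m] [DecidableEq m] [Fintype q]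
    {M : Matrix m m ℝ} (hM : M.PosSemidef) {lam η : ℝ} (hlam1 : lam < 1)
    (hη : η = 1 / (1 + √(1 - lam ^ 2))) (heig : ∀ i, hM.1.eigenvalues i ≤ lam)
    (Y : Matrix m q ℝ) (k : ℕ) :
    froSq (lcaSeq M η Y (k + 1)) + froSq (lcaSeq M η Y k) ≤ 14 * η ^ k * froSq Y := by
  obtain ⟨V, hV, hVM⟩ := hM.1.exists_orthogonal_mul_eq_diagonal_mul
  rw [← froSq_mul_of_transpose_mul_self hV, ← froSq_mul_of_transpose_mul_self hV Y,
    ← froSq_mul_of_transpose_mul_self hV (lcaSeq M η Y k), mul_lcaSeq_of_mul_eq M η Y hVM,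
    mul_lcaSeq_of_mul_eq M η Y hVM]
  simp only [froSq, ← Finset.sum_add_distrib, Finset.mul_sum]
  gcongr with i _ j _
  exact lca_scalar_bound hlam1 hη (hM.eigenvalues_nonneg i) (heig i)
    (fun k => lcaSeq _ η (V * Y) k i j) rfl
    (fun k => lcaSeq_diagonal_apply_add_two η _ _ i j k) k

section AvgMatrix

variable {n : ℕ} {W : Matrix (Fin n) (Fin n) ℝ}

theorem isIdempotentElem_avgMatrix (hn : n ≠ 0) : IsIdempotentElem (avgMatrix n) := by
  ext i j
  simp only [avgMatrix, Matrix.mul_apply, of_apply, sum_const, card_univ, Fintype.card_fin,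
    nsmul_eq_mul]
  field_simp

theorem mul_avgMatrix (hrow : ∀ i, ∑ j, W i j = 1) : W * avgMatrix n = avgMatrix n := by
  ext i j
  simp only [avgMatrix, Matrix.mul_apply, Matrix.of_apply]
  rw [← Finset.sum_mul, hrow i, one_mul]

theorem avgMatrix_mul (hcol : ∀ j, ∑ i, W i j = 1) : avgMatrix n * W = avgMatrix n := by
  ext i j
  simp only [avgMatrix, Matrix.mul_apply, Matrix.of_apply]
  rw [← Finset.mul_sum, hcol j, mul_one]

theorem commute_one_sub_avgMatrix (hrow : ∀ i, ∑ j, W i j = 1) (hcol : ∀ j, ∑ i, W i j = 1) :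
    Commute (1 - avgMatrix n) W := by
  simp only [Commute, SemiconjBy, Matrix.sub_mul, Matrix.mul_sub, Matrix.one_mul, Matrix.mul_one,
    mul_avgMatrix hrow, avgMatrix_mul hcol]

theorem posSemidef_sub_avgMatrix (hn : n ≠ 0) (hW : W.PosSemidef)
    (hrow : ∀ i, ∑ j, W i j = 1) (hcol : ∀ j, ∑ i, W i j = 1) :
    (W - avgMatrix n).PosSemidef := by
  have hJ : (avgMatrix n)ᴴ = avgMatrix n := by ext; simp [avgMatrix]
  have hconj : (1 - avgMatrix n)ᴴ * W * (1 - avgMatrix n) = W - avgMatrix n := by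
    rw [conjTranspose_sub, conjTranspose_one, hJ, (commute_one_sub_avgMatrix hrow hcol).eq,
      Matrix.mul_assoc, (isIdempotentElem_avgMatrix hn).one_sub.eq, Matrix.mul_sub,
      Matrix.mul_one, mul_avgMatrix hrow]
  exact hconj ▸ hW.conjTranspose_mul_mul_same _

end AvgMatrix

theorem lca_contraction_general (n p : ℕ) (hn : 0 < n)
    (W : Matrix (Fin n) (Fin n) ℝ)
    (hWpsd : W.PosSemidef)
    (hWrow : ∀ i, ∑ j, W i j = 1) (hWcol : ∀ j, ∑ i, W i j = 1)
    (lam : ℝ) (hlam : lam = specNorm (W - avgMatrix n)) (hlam1 : lam < 1)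
    (ηw ρw : ℝ)
    (hηw : ηw = 1 / (1 + Real.sqrt (1 - lam ^ 2)))
    (hρw : ρw = Real.sqrt ηw)
    -- Π := Iₙ − (1/n) 𝟙𝟙ᵀ,  Π̃ := diag(Π, Π),  W̃ the augmented LCA matrix
    (Pi : Matrix (Fin n) (Fin n) ℝ) (hPi : Pi = 1 - avgMatrix n)
    (Pit : Matrix (Fin n ⊕ Fin n) (Fin n ⊕ Fin n) ℝ)
    (hPit : Pit = Matrix.fromBlocks Pi 0 0 Pi)
    (Wt : Matrix (Fin n ⊕ Fin n) (Fin n ⊕ Fin n) ℝ)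
    (hWt : Wt = Matrix.fromBlocks ((1 + ηw) • W) ((-ηw) • 1) 1 0) :
    ∀ (A : Matrix (Fin n) (Fin p) ℝ) (k : ℕ),
      froSq (Pit * Wt ^ k * Pit * Matrix.of (Sum.elim A A))
        ≤ 14 * ρw ^ (2 * k) * froSq (Pi * A) := by
  intro A k
  obtain rfl : Wt = lcaBlock W ηw := hWt
  subst hPit
  have hJ := isIdempotentElem_avgMatrix hn.ne'
  have hPiIdem : IsIdempotentElem Pi := hPi ▸ hJ.one_sub
  have hPiW : Commute Pi W := hPi ▸ commute_one_sub_avgMatrix hWrow hWcol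
  have hWPi : W * Pi = (W - avgMatrix n) * Pi := by
    rw [hPi, Matrix.sub_mul _ (avgMatrix n), Matrix.mul_sub (avgMatrix n), Matrix.mul_one, hJ.eq,
      sub_self, sub_zero]
  have hM := posSemidef_sub_avgMatrix hn.ne' hWpsd hWrow hWcol
  have heig : ∀ i, hM.1.eigenvalues i ≤ lam := fun i => hlam ▸ hM.1.eigenvalues_le_specNorm i
  have hρ : ρw ^ (2 * k) = ηw ^ k := by
    rw [hρw, pow_mul, Real.sq_sqrt (by rw [hηw]; positivity)]
  rw [show Matrix.of (Sum.elim A A) = fromRows A A from rfl, hρ,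
    fromBlocks_mul_lcaBlock_pow_mul_fromBlocks_mul_fromRows W ηw A hPiIdem hPiW, froSq_fromRows,
    lcaSeq_eq_of_mul_eq W ηw A hWPi hPiW, lcaSeq_eq_of_mul_eq W ηw A hWPi hPiW]
  exact froSq_lcaSeq_le hM hlam1 hηw heig _ k

/-- the Loopless Chebyshev Acceleration contraction property
(Lemma 11 in Song et al. / Lemma 1 in the paper). -/
theorem lca_contraction (n p : ℕ) (hn : 0 < n) (hp : 0 < p)
    (W : Matrix (Fin n) (Fin n) ℝ)
    (hWsymm : W.IsSymm) (hWpsd : W.PosSemidef)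
    (hWnonneg : ∀ i j, 0 ≤ W i j)
    (hWrow : ∀ i, ∑ j, W i j = 1) (hWcol : ∀ j, ∑ i, W i j = 1)
    (lam : ℝ) (hlam : lam = specNorm (W - avgMatrix n)) (hlam1 : lam < 1)
    (ηw ρw : ℝ)
    (hηw : ηw = 1 / (1 + Real.sqrt (1 - lam ^ 2)))
    (hρw : ρw = Real.sqrt ηw)
    -- Π := Iₙ − (1/n) 𝟙𝟙ᵀ,  Π̃ := diag(Π, Π),  W̃ the augmented LCA matrix
    (Pi : Matrix (Fin n) (Fin n) ℝ) (hPi : Pi = 1 - avgMatrix n)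
    (Pit : Matrix (Fin n ⊕ Fin n) (Fin n ⊕ Fin n) ℝ)
    (hPit : Pit = Matrix.fromBlocks Pi 0 0 Pi)
    (Wt : Matrix (Fin n ⊕ Fin n) (Fin n ⊕ Fin n) ℝ)
    (hWt : Wt = Matrix.fromBlocks ((1 + ηw) • W) ((-ηw) • 1) 1 0) :
    ∀ (A : Matrix (Fin n) (Fin p) ℝ) (k : ℕ),
      froSq (Pit * Wt ^ k * Pit * Matrix.of (Sum.elim A A))
        ≤ 14 * ρw ^ (2 * k) * froSq (Pi * A) :=
  lca_contraction_general n p hn W hWpsd hWrow hWcol lam hlam hlam1 ηw ρw hηw hρw Pi hPi Pit hPit Wt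
    hWt
end
end

section
/- Let a, c ≥ 0 and b > 0, and let (s_t)_{t≥0} and (q_t)_{t≥0} be nonnegative real sequences such that s_{t+1} ≤ (1+a)s_t − b q_t + c for every t ≥ 0. Then for every integer T ≥ 1, min_{t=0,…,T−1} q_t ≤ ((1+a)^T/(bT)) s_0 + c/b. -/
/-!
Multiplying the recursion at step `t` by `(1+a)^(T-1-t)` and summing telescopes the `s`-terms, so
`∑_{t<T} (1+a)^(T-1-t) (b q_t - c) ≤ (1+a)^T s_0 - s_T ≤ (1+a)^T s_0`. Each `q_t` is at least the
minimum, and the total weight `∑_{k<T} (1+a)^k` is at least `T`.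
-/

open Finset

theorem add_sum_pow_mul_le_pow_mul_of_le_mul_sub {R : Type*} [CommRing R] [PartialOrder R]
    [IsOrderedRing R] {r : R} (hr : 0 ≤ r) {s u : ℕ → R}
    (h : ∀ t, s (t + 1) ≤ r * s t - u t) (n : ℕ) :
    s n + ∑ t ∈ range n, r ^ (n - 1 - t) * u t ≤ r ^ n * s 0 := by
  induction n with
  | zero => simp
  | succ n ih =>
    have hsum : ∑ t ∈ range (n + 1), r ^ (n + 1 - 1 - t) * u t
        = r * ∑ t ∈ range n, r ^ (n - 1 - t) * u t + u n := by
      rw [sum_range_succ, mul_sum, Nat.add_sub_cancel, Nat.sub_self, pow_zero, one_mul]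
      congr 1
      refine sum_congr rfl fun t ht => ?_
      rw [← mul_assoc, ← pow_succ', show n - 1 - t + 1 = n - t by grind]
    calc s (n + 1) + ∑ t ∈ range (n + 1), r ^ (n + 1 - 1 - t) * u t
        ≤ r * (s n + ∑ t ∈ range n, r ^ (n - 1 - t) * u t) := by
          rw [hsum]; linear_combination h n
      _ ≤ r ^ (n + 1) * s 0 := by
          rw [pow_succ', mul_assoc]; exact mul_le_mul_of_nonneg_left ih hr

theorem natCast_le_geom_sum {R : Type*} [CommSemiring R] [PartialOrder R] [IsOrderedRing R]
    {r : R} (hr : 1 ≤ r) (n : ℕ) : (n : R) ≤ ∑ k ∈ range n, r ^ k := by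
  simpa using card_nsmul_le_sum (range n) (r ^ ·) 1 fun k _ => one_le_pow₀ hr

/-- Lemma 12 in the paper, from Mishchenko et al.:
if `s_{t+1} ≤ (1+a) s_t − b q_t + c`, then
`min_{t < T} q_t ≤ (1+a)^T / (bT) · s_0 + c / b`. -/
theorem min_bound_of_recursion (a b c : ℝ) (ha : 0 ≤ a) (hb : 0 < b)
    (s q : ℕ → ℝ) (hs : ∀ t, 0 ≤ s t)
    (hrec : ∀ t, s (t + 1) ≤ (1 + a) * s t - b * q t + c)
    (T : ℕ) (hT : 1 ≤ T) :
    (Finset.range T).inf' (Finset.nonempty_range_iff.mpr (by omega)) q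
      ≤ (1 + a) ^ T / (b * T) * s 0 + c / b := by
  set m := (range T).inf' (nonempty_range_iff.mpr (by omega)) q
  set W := ∑ k ∈ range T, (1 + a) ^ k
  have hr : (0 : ℝ) ≤ 1 + a := by linarith
  have hTW : (T : ℝ) ≤ W := natCast_le_geom_sum (by linarith) T
  have hT0 : (0 : ℝ) < T := by exact_mod_cast hT
  have hweighted : (b * m - c) * W ≤ (1 + a) ^ T * s 0 := calc
    (b * m - c) * W = ∑ t ∈ range T, (1 + a) ^ (T - 1 - t) * (b * m - c) := by
      rw [mul_comm, ← sum_mul, sum_range_reflect (fun k => (1 + a) ^ k)]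
    _ ≤ ∑ t ∈ range T, (1 + a) ^ (T - 1 - t) * (b * q t - c) :=
      sum_le_sum fun t ht => mul_le_mul_of_nonneg_left
        (by gcongr; exact inf'_le q ht) (pow_nonneg hr _)
    _ ≤ (1 + a) ^ T * s 0 := by
      linarith [hs T, add_sum_pow_mul_le_pow_mul_of_le_mul_sub hr (s := s)
        (u := fun t => b * q t - c) (fun t => by linarith [hrec t]) T]
  have hX : 0 ≤ (1 + a) ^ T * s 0 := mul_nonneg (pow_nonneg hr T) (hs 0)
  have hbound : b * m - c ≤ (1 + a) ^ T * s 0 / T := calc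
    b * m - c ≤ (1 + a) ^ T * s 0 / W := (le_div_iff₀ (by linarith)).mpr hweighted
    _ ≤ (1 + a) ^ T * s 0 / T := div_le_div_of_nonneg_left hX hT0 hTW
  calc m = (b * m - c) / b + c / b := by field_simp; ring
    _ ≤ (1 + a) ^ T * s 0 / T / b + c / b := by gcongr
    _ = (1 + a) ^ T / (b * T) * s 0 + c / b := by field_simp
end

section
/- Let each f_i : ℝ^p → ℝ (i = 1,…,n) be L-smooth and bounded below with f_i^* := inf f_i > −∞, and set f := (1/n)∑_{i=1}^n f_i, f^* := inf f, σ_f^* := f^* − (1/n)∑_{i=1}^n f_i^*. Then for any points x_1, …, x_n ∈ ℝ^p with average x̄ := (1/n)∑_{i=1}^n x_i: (1/n)∑_{i=1}^n (f_i(x_i) − f_i^*) ≤ 2(f(x̄) − f^*) + 2σ_f^* + (L/n)∑_{i=1}^n ‖x_i − x̄‖². -/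
open Finset
open scoped InnerProductSpace

noncomputable section

/-!
Lipschitz continuity of the gradient gives the quadratic upper bound
`f y ≤ f x + ⟪∇f x, y - x⟫ + L/2 ‖y - x‖²`. Applied at the gradient step `y = x - L⁻¹ ∇f x`
together with a lower bound `m` of `f`, it yields `‖∇f x‖² ≤ 2L (f x - m)`; bounding the inner
product by Young's inequality then gives `f y - m ≤ 2 (f x - m) + L ‖y - x‖²` for each `fᵢ`
separately. Averaging these bounds at `x = x̄` gives the theorem, in which `f^*` cancels.
-/

section LipschitzGradient

variable {E : Type*} [NormedAddCommGroup E] [InnerProductSpace ℝ E] [CompleteSpace E]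
  {f : E → ℝ} {L : ℝ}

theorem le_add_inner_gradient_add_sq_of_lipschitz_gradient (hf : Differentiable ℝ f)
    (hL : ∀ u v, ‖gradient f u - gradient f v‖ ≤ L * ‖u - v‖) (x y : E) :
    f y ≤ f x + ⟪gradient f x, y - x⟫_ℝ + L / 2 * ‖y - x‖ ^ 2 := by
  set d := y - x
  -- `g` is antitone on `[0, ∞)`, and `g 1 ≤ g 0` is the claim.
  set g : ℝ → ℝ := fun t ↦ f (x + t • d) - t * ⟪gradient f x, d⟫_ℝ - L / 2 * t ^ 2 * ‖d‖ ^ 2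
  have hg : ∀ t, HasDerivAt g
      (⟪gradient f (x + t • d) - gradient f x, d⟫_ℝ - L * t * ‖d‖ ^ 2) t := by
    intro t
    have hline : HasDerivAt (fun t : ℝ ↦ x + t • d) d t := by
      simpa using ((hasDerivAt_id t).smul_const d).const_add x
    have hfline := (hf (x + t • d)).hasGradientAt.hasFDerivAt.comp_hasDerivAt t hline
    have hquad := ((hasDerivAt_pow 2 t).const_mul (L / 2)).mul_const (‖d‖ ^ 2)
    have hlinear := (hasDerivAt_id t).mul_const ⟪gradient f x, d⟫_ℝ
    refine ((hfline.sub hlinear).sub hquad).congr_deriv ?_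
    simp only [InnerProductSpace.toDual_apply_apply, inner_sub_left]
    push_cast
    ring
  have hg_nonpos : ∀ t ∈ interior (Set.Ici (0 : ℝ)),
      ⟪gradient f (x + t • d) - gradient f x, d⟫_ℝ - L * t * ‖d‖ ^ 2 ≤ 0 := by
    intro t ht
    rw [interior_Ici, Set.mem_Ioi] at ht
    have := calc ⟪gradient f (x + t • d) - gradient f x, d⟫_ℝ
        ≤ ‖gradient f (x + t • d) - gradient f x‖ * ‖d‖ := real_inner_le_norm _ _
      _ ≤ L * ‖(x + t • d) - x‖ * ‖d‖ := by gcongr; exact hL _ _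
      _ = L * t * ‖d‖ ^ 2 := by
        rw [add_sub_cancel_left, norm_smul, Real.norm_of_nonneg ht.le]; ring
    linarith
  have hanti := antitoneOn_of_hasDerivWithinAt_nonpos (convex_Ici 0)
    (fun t _ ↦ (hg t).continuousAt.continuousWithinAt) (fun t _ ↦ (hg t).hasDerivWithinAt)
    hg_nonpos Set.self_mem_Ici (Set.mem_Ici.2 zero_le_one) zero_le_one
  simp only [g, one_smul, zero_smul, add_zero, add_sub_cancel, d] at hanti
  linarith

theorem sq_norm_gradient_le_of_lipschitz_gradient (hL₀ : 0 < L) (hf : Differentiable ℝ f)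
    (hL : ∀ u v, ‖gradient f u - gradient f v‖ ≤ L * ‖u - v‖) {m : ℝ}
    (hm : m ∈ lowerBounds (Set.range f)) (x : E) :
    ‖gradient f x‖ ^ 2 ≤ 2 * L * (f x - m) := by
  have hstep := le_add_inner_gradient_add_sq_of_lipschitz_gradient hf hL x
    (x - L⁻¹ • gradient f x)
  rw [sub_sub_cancel_left, inner_neg_right, real_inner_smul_right, real_inner_self_eq_norm_sq,
    norm_neg, norm_smul, Real.norm_of_nonneg (inv_nonneg.2 hL₀.le)] at hstep
  have hquad : L / 2 * (L⁻¹ * ‖gradient f x‖) ^ 2 = L⁻¹ * ‖gradient f x‖ ^ 2 / 2 := by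
    field_simp
  have hlower : m ≤ f (x - L⁻¹ • gradient f x) := hm ⟨_, rfl⟩
  calc ‖gradient f x‖ ^ 2 = L * (L⁻¹ * ‖gradient f x‖ ^ 2) := by field_simp
    _ ≤ L * (2 * (f x - m)) := mul_le_mul_of_nonneg_left (by linarith) hL₀.le
    _ = 2 * L * (f x - m) := by ring

theorem sub_le_two_mul_sub_add_mul_sq_of_lipschitz_gradient (hL₀ : 0 < L)
    (hf : Differentiable ℝ f) (hL : ∀ u v, ‖gradient f u - gradient f v‖ ≤ L * ‖u - v‖) {m : ℝ}
    (hm : m ∈ lowerBounds (Set.range f)) (x y : E) :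
    f y - m ≤ 2 * (f x - m) + L * ‖y - x‖ ^ 2 := by
  have hupper := le_add_inner_gradient_add_sq_of_lipschitz_gradient hf hL x y
  have hgrad := sq_norm_gradient_le_of_lipschitz_gradient hL₀ hf hL hm x
  have hinner := real_inner_le_norm (gradient f x) (y - x)
  have hyoung := two_mul_le_add_sq ‖gradient f x‖ (L * ‖y - x‖)
  nlinarith

end LipschitzGradient

theorem avg_local_gap_bound_general (n p : ℕ) (L : ℝ) (hL : 0 < L)
    (f : Fin n → EuclideanSpace ℝ (Fin p) → ℝ)
    (hdiff : ∀ i, Differentiable ℝ (f i))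
    (hsmooth : ∀ i x x', ‖gradient (f i) x - gradient (f i) x'‖ ≤ L * ‖x - x'‖)
    (fStar : Fin n → ℝ) (hfStar : ∀ i, IsGLB (Set.range (f i)) (fStar i))
    (F : EuclideanSpace ℝ (Fin p) → ℝ) (hF : ∀ v, F v = (n : ℝ)⁻¹ * ∑ i, f i v)
    (Fstar : ℝ)
    (sigf : ℝ) (hsigf : sigf = Fstar - (n : ℝ)⁻¹ * ∑ i, fStar i)
    (x : Fin n → EuclideanSpace ℝ (Fin p))
    (xbar : EuclideanSpace ℝ (Fin p)) :
    (n : ℝ)⁻¹ * ∑ i, (f i (x i) - fStar i)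
      ≤ 2 * (F xbar - Fstar) + 2 * sigf + (L / (n : ℝ)) * ∑ i, ‖x i - xbar‖ ^ 2 := by
  have hlocal : ∀ i, f i (x i) - fStar i ≤ 2 * (f i xbar - fStar i) + L * ‖x i - xbar‖ ^ 2 :=
    fun i ↦ sub_le_two_mul_sub_add_mul_sq_of_lipschitz_gradient hL (hdiff i) (hsmooth i)
      (hfStar i).1 xbar (x i)
  rw [hF, hsigf]
  calc (n : ℝ)⁻¹ * ∑ i, (f i (x i) - fStar i)
      ≤ (n : ℝ)⁻¹ * ∑ i, (2 * (f i xbar - fStar i) + L * ‖x i - xbar‖ ^ 2) := by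
        gcongr with i; exact hlocal i
    _ = 2 * ((n : ℝ)⁻¹ * ∑ i, f i xbar - Fstar) + 2 * (Fstar - (n : ℝ)⁻¹ * ∑ i, fStar i)
        + (L / (n : ℝ)) * ∑ i, ‖x i - xbar‖ ^ 2 := by
        simp only [sum_add_distrib, ← mul_sum, sum_sub_distrib]
        ring

/-- bound on the averaged local suboptimality gaps
`(1/n) ∑ᵢ (fᵢ(xᵢ) − fᵢ^*)` in terms of the aggregate gap at the average point. -/
theorem avg_local_gap_bound (n p : ℕ) (hn : 0 < n) (L : ℝ) (hL : 0 < L)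
    (f : Fin n → EuclideanSpace ℝ (Fin p) → ℝ)
    (hdiff : ∀ i, Differentiable ℝ (f i))
    (hsmooth : ∀ i x x', ‖gradient (f i) x - gradient (f i) x'‖ ≤ L * ‖x - x'‖)
    (fStar : Fin n → ℝ) (hfStar : ∀ i, IsGLB (Set.range (f i)) (fStar i))
    (F : EuclideanSpace ℝ (Fin p) → ℝ) (hF : ∀ v, F v = (n : ℝ)⁻¹ * ∑ i, f i v)
    (Fstar : ℝ) (hFstar : IsGLB (Set.range F) Fstar)
    (sigf : ℝ) (hsigf : sigf = Fstar - (n : ℝ)⁻¹ * ∑ i, fStar i)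
    (x : Fin n → EuclideanSpace ℝ (Fin p))
    (xbar : EuclideanSpace ℝ (Fin p)) (hxbar : xbar = (n : ℝ)⁻¹ • ∑ i, x i) :
    (n : ℝ)⁻¹ * ∑ i, (f i (x i) - fStar i)
      ≤ 2 * (F xbar - Fstar) + 2 * sigf + (L / (n : ℝ)) * ∑ i, ‖x i - xbar‖ ^ 2 :=
  avg_local_gap_bound_general n p L hL f hdiff hsmooth fStar hfStar F hF Fstar sigf hsigf x xbar
end
end

section
/- Under the DSMT setup, the initial tracking variable y_0 = (1−β)g_0 satisfies E[‖Πy_0‖²] ≤ (1−β)² · { 2nC(f(x̄_0) − f^*) + 2nCσ_f^* + nσ² + 2L(L+C)‖Πx_0‖² + 2∑_{i=1}^n ‖∇f_i(x̄_0)‖² }. -/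
open MeasureTheory Finset ProbabilityTheory

noncomputable section

/-- Points live in `ℝ^p` (Euclidean space). -/
abbrev Vec (p : ℕ) := EuclideanSpace ℝ (Fin p)

/-- A stacked variable: one row (point of `ℝ^p`) per agent. -/
abbrev Stacked (n p : ℕ) := Fin n → Vec p

/-- Average of the rows of a stacked variable. -/
def rowAvg {n p : ℕ} (X : Stacked n p) : Vec p := (n : ℝ)⁻¹ • ∑ i, X i

/-- Squared Frobenius norm of a stacked variable. -/
def fro2 {n p : ℕ} (X : Stacked n p) : ℝ := ∑ i, ‖X i‖ ^ 2

/-- Consensus error `Π X`: row `i` is `Xᵢ − X̄`. -/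
def consErr {n p : ℕ} (X : Stacked n p) : Stacked n p := fun i => X i - rowAvg X

open scoped RealInnerProductSpace

/-!
Scaling by `1 - β` and dropping the mean component (`Π` is an orthogonal projection) reduce the
claim to bounding `∑ᵢ E‖gᵢ‖²`. Each term is variance plus squared mean, hence at most
`C (fᵢ(xᵢ) - fᵢ*) + σ² + ‖∇fᵢ(xᵢ)‖²` by the ABC condition. `L`-smoothness transports both
quantities from `xᵢ` to `x̄`: the descent lemma together with `‖∇fᵢ‖² ≤ 2L (fᵢ - fᵢ*)` gives
`fᵢ(xᵢ) - fᵢ* ≤ 2 (fᵢ(x̄) - fᵢ*) + L ‖xᵢ - x̄‖²`, and the Lipschitz gradient gives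
`‖∇fᵢ(xᵢ)‖² ≤ 2L² ‖xᵢ - x̄‖² + 2 ‖∇fᵢ(x̄)‖²`. Finally `∑ᵢ (fᵢ(x̄) - fᵢ*) = n (f(x̄) - f*) + n σ_f*`.
-/

section Smooth

variable {E : Type*} [NormedAddCommGroup E] [InnerProductSpace ℝ E] [CompleteSpace E]
  {f : E → ℝ} {L m : ℝ}

lemma hasDerivAt_comp_add_smul (hf : Differentiable ℝ f) (y d : E) (t : ℝ) :
    HasDerivAt (fun s : ℝ => f (y + s • d)) ⟪gradient f (y + t • d), d⟫ t := by
  have hline : HasDerivAt (fun s : ℝ => y + s • d) d t := by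
    simpa using ((hasDerivAt_id t).smul_const d).const_add y
  simpa [InnerProductSpace.toDual_apply_apply, Function.comp_def] using
    (hf (y + t • d)).hasGradientAt.hasFDerivAt.comp_hasDerivAt t hline

lemma descent_lemma (hf : Differentiable ℝ f)
    (hs : ∀ v v', ‖gradient f v - gradient f v'‖ ≤ L * ‖v - v'‖) (x y : E) :
    f x ≤ f y + ⟪gradient f y, x - y⟫ + L / 2 * ‖x - y‖ ^ 2 := by
  set d := x - y
  -- `h` is antitone on `[0, 1]` because `⟪∇f (y + t d) - ∇f y, d⟫ ≤ L t ‖d‖²`.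
  set h : ℝ → ℝ := fun t => f (y + t • d) - t * ⟪gradient f y, d⟫ - L / 2 * ‖d‖ ^ 2 * t ^ 2
  have hder : ∀ t, HasDerivAt h
      (⟪gradient f (y + t • d), d⟫ - ⟪gradient f y, d⟫ - L * ‖d‖ ^ 2 * t) t := fun t => by
    have := ((hasDerivAt_comp_add_smul hf y d t).sub
      ((hasDerivAt_id t).mul_const ⟪gradient f y, d⟫)).sub
      ((hasDerivAt_pow 2 t).const_mul (L / 2 * ‖d‖ ^ 2))
    exact this.congr_deriv (by norm_num; ring)
  have hanti : AntitoneOn h (Set.Icc 0 1) := by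
    refine antitoneOn_of_deriv_nonpos (convex_Icc 0 1)
      (HasDerivAt.continuousOn fun t _ => hder t)
      (fun t _ => (hder t).differentiableAt.differentiableWithinAt) fun t ht => ?_
    rw [interior_Icc] at ht
    rw [(hder t).deriv, sub_nonpos, ← inner_sub_left]
    calc ⟪gradient f (y + t • d) - gradient f y, d⟫
        ≤ ‖gradient f (y + t • d) - gradient f y‖ * ‖d‖ := real_inner_le_norm _ _
      _ ≤ L * ‖t • d‖ * ‖d‖ := by
          gcongr
          simpa using hs (y + t • d) y
      _ = L * ‖d‖ ^ 2 * t := by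
          rw [norm_smul, Real.norm_of_nonneg ht.1.le]; ring
  have := hanti (by norm_num) (by norm_num) zero_le_one
  simp only [h, d, zero_smul, add_zero, one_smul, add_sub_cancel] at this
  linarith

lemma norm_gradient_sq_le (hL : 0 < L) (hf : Differentiable ℝ f)
    (hs : ∀ v v', ‖gradient f v - gradient f v'‖ ≤ L * ‖v - v'‖) (hm : ∀ v, m ≤ f v) (y : E) :
    ‖gradient f y‖ ^ 2 ≤ 2 * L * (f y - m) := by
  -- a gradient step of length `1 / L` decreases `f` by `‖∇f y‖² / (2L)`
  have hstep := descent_lemma hf hs (y - L⁻¹ • gradient f y) y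
  rw [sub_sub_cancel_left, inner_neg_right, real_inner_smul_right, norm_neg, norm_smul,
    real_inner_self_eq_norm_sq, Real.norm_of_nonneg (inv_nonneg.2 hL.le)] at hstep
  have hquad : L / 2 * (L⁻¹ * ‖gradient f y‖) ^ 2 = L⁻¹ * ‖gradient f y‖ ^ 2 / 2 := by
    field_simp
  have hdecrease : L⁻¹ * ‖gradient f y‖ ^ 2 ≤ 2 * (f y - m) := by
    linarith [hm (y - L⁻¹ • gradient f y)]
  calc ‖gradient f y‖ ^ 2 = L * (L⁻¹ * ‖gradient f y‖ ^ 2) := by field_simp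
    _ ≤ L * (2 * (f y - m)) := by gcongr
    _ = 2 * L * (f y - m) := by ring

lemma sub_le_two_mul_sub_add (hL : 0 < L) (hf : Differentiable ℝ f)
    (hs : ∀ v v', ‖gradient f v - gradient f v'‖ ≤ L * ‖v - v'‖) (hm : ∀ v, m ≤ f v) (x y : E) :
    f x - m ≤ 2 * (f y - m) + L * ‖x - y‖ ^ 2 := by
  have hdescent := descent_lemma hf hs x y
  have hgrad := norm_gradient_sq_le hL hf hs hm y
  have hyoung : 2 * L * ⟪gradient f y, x - y⟫ ≤ ‖gradient f y‖ ^ 2 + L ^ 2 * ‖x - y‖ ^ 2 := by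
    have := real_inner_le_norm (gradient f y) (x - y)
    nlinarith [sq_nonneg (‖gradient f y‖ - L * ‖x - y‖)]
  have : ⟪gradient f y, x - y⟫ ≤ (f y - m) + L / 2 * ‖x - y‖ ^ 2 := by
    rw [← mul_le_mul_iff_of_pos_left (by positivity : 0 < 2 * L)]
    nlinarith
  linarith

omit [InnerProductSpace ℝ E] [CompleteSpace E] in
lemma norm_sq_le_of_lipschitz {F : Type*} [SeminormedAddCommGroup F] {g : E → F}
    (hg : ∀ v v', ‖g v - g v'‖ ≤ L * ‖v - v'‖) (x y : E) :
    ‖g x‖ ^ 2 ≤ 2 * L ^ 2 * ‖x - y‖ ^ 2 + 2 * ‖g y‖ ^ 2 := by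
  calc ‖g x‖ ^ 2 ≤ (‖g x - g y‖ + ‖g y‖) ^ 2 := by
        gcongr; simpa using norm_add_le (g x - g y) (g y)
    _ ≤ 2 * (‖g x - g y‖ ^ 2 + ‖g y‖ ^ 2) := add_sq_le
    _ ≤ 2 * ((L * ‖x - y‖) ^ 2 + ‖g y‖ ^ 2) := by gcongr; exact hg x y
    _ = 2 * L ^ 2 * ‖x - y‖ ^ 2 + 2 * ‖g y‖ ^ 2 := by ring

lemma mul_sub_add_norm_gradient_sq_le {C : ℝ} (hC : 0 ≤ C) (hL : 0 < L)
    (hf : Differentiable ℝ f) (hs : ∀ v v', ‖gradient f v - gradient f v'‖ ≤ L * ‖v - v'‖)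
    (hm : ∀ v, m ≤ f v) (x y : E) :
    C * (f x - m) + ‖gradient f x‖ ^ 2 ≤
      2 * C * (f y - m) + 2 * L * (L + C) * ‖x - y‖ ^ 2 + 2 * ‖gradient f y‖ ^ 2 := by
  have hval := mul_le_mul_of_nonneg_left (sub_le_two_mul_sub_add hL hf hs hm x y) hC
  have hgrad := norm_sq_le_of_lipschitz hs x y
  nlinarith [mul_nonneg (mul_nonneg hC hL.le) (sq_nonneg ‖x - y‖)]

end Smooth

lemma integral_norm_sq_eq_integral_norm_sub_sq_add {E : Type*} [NormedAddCommGroup E]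
    [InnerProductSpace ℝ E] [CompleteSpace E] {Ω : Type*} [MeasurableSpace Ω] {μ : Measure Ω}
    [IsProbabilityMeasure μ] {g : Ω → E} (hg : MemLp g 2 μ) :
    ∫ ω, ‖g ω‖ ^ 2 ∂μ = ∫ ω, ‖g ω - μ[g]‖ ^ 2 ∂μ + ‖μ[g]‖ ^ 2 := by
  set m := μ[g]
  have hint : Integrable g μ := hg.integrable one_le_two
  have hsq : Integrable (fun ω => ‖g ω‖ ^ 2) μ := hg.integrable_norm_pow two_ne_zero
  have hinner : Integrable (fun ω => 2 * ⟪m, g ω⟫) μ := (hint.const_inner m).const_mul 2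
  have hdiff : Integrable (fun ω => ‖g ω‖ ^ 2 - 2 * ⟪m, g ω⟫) μ := hsq.sub hinner
  have hexpand : ∀ ω, ‖g ω - m‖ ^ 2 = ‖g ω‖ ^ 2 - 2 * ⟪m, g ω⟫ + ‖m‖ ^ 2 := fun ω => by
    rw [norm_sub_sq_real, real_inner_comm]
  have : ∫ ω, ‖g ω - m‖ ^ 2 ∂μ = ∫ ω, ‖g ω‖ ^ 2 ∂μ - ‖m‖ ^ 2 := by
    simp_rw [hexpand]
    rw [integral_add hdiff (integrable_const _), integral_sub hsq hinner, integral_const_mul,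
      integral_const, integral_inner hint, real_inner_self_eq_norm_sq]
    simp only [probReal_univ, one_smul]
    ring
  linarith

section Stacked

variable {n p : ℕ}

lemma fro2_nonneg (X : Stacked n p) : 0 ≤ fro2 X :=
  Finset.sum_nonneg fun _ _ => sq_nonneg _

lemma fro2_smul (c : ℝ) (X : Stacked n p) : fro2 (c • X) = c ^ 2 * fro2 X := by
  simp only [fro2, Finset.mul_sum, Pi.smul_apply, norm_smul, mul_pow, Real.norm_eq_abs, sq_abs]

lemma consErr_smul (c : ℝ) (X : Stacked n p) : consErr (c • X) = c • consErr X := by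
  ext1 i
  simp only [consErr, rowAvg, Pi.smul_apply, ← Finset.smul_sum, smul_comm c, smul_sub]

lemma fro2_consErr_le (X : Stacked n p) : fro2 (consErr X) ≤ fro2 X := by
  rcases Nat.eq_zero_or_pos n with rfl | hn
  · simp [fro2]
  have hsum : ∑ i, X i = (n : ℝ) • rowAvg X := by
    rw [rowAvg, smul_smul, mul_inv_cancel₀ (by exact_mod_cast hn.ne'), one_smul]
  have hexpand :
      fro2 (consErr X) = fro2 X - 2 * ⟪∑ i, X i, rowAvg X⟫ + n * ‖rowAvg X‖ ^ 2 := by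
    simp only [fro2, consErr, norm_sub_sq_real, sum_inner, Finset.sum_add_distrib,
      Finset.sum_sub_distrib, Finset.mul_sum, Finset.sum_const, Finset.card_univ,
      Fintype.card_fin, nsmul_eq_mul]
  rw [hexpand, hsum, real_inner_smul_left, real_inner_self_eq_norm_sq]
  nlinarith [mul_nonneg (Nat.cast_nonneg n : (0 : ℝ) ≤ n) (sq_nonneg ‖rowAvg X‖)]

lemma integral_fro2 {Ω : Type*} [MeasurableSpace Ω] {μ : Measure Ω} {G : Ω → Stacked n p}
    (hG : ∀ i, MemLp (fun ω => G ω i) 2 μ) :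
    ∫ ω, fro2 (G ω) ∂μ = ∑ i, ∫ ω, ‖G ω i‖ ^ 2 ∂μ :=
  integral_finsetSum _ fun i _ => (hG i).integrable_norm_pow two_ne_zero

lemma integrable_fro2 {Ω : Type*} [MeasurableSpace Ω] {μ : Measure Ω} {G : Ω → Stacked n p}
    (hG : ∀ i, MemLp (fun ω => G ω i) 2 μ) : Integrable (fun ω => fro2 (G ω)) μ :=
  integrable_finsetSum _ fun i _ => (hG i).integrable_norm_pow two_ne_zero

end Stacked

lemma natCast_mul_inv_mul_sum {n : ℕ} (a : Fin n → ℝ) :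
    (n : ℝ) * ((n : ℝ)⁻¹ * ∑ i, a i) = ∑ i, a i := by
  rcases Nat.eq_zero_or_pos n with rfl | hn
  · simp
  · field_simp

theorem initial_tracking_bound_general (n p : ℕ)
    (L C σ β : ℝ) (hL : 0 < L) (hC : 0 ≤ C)
    -- objective functions
    (f : Fin n → Vec p → ℝ)
    (hdiff : ∀ i, Differentiable ℝ (f i))
    (hsmooth : ∀ i v v', ‖gradient (f i) v - gradient (f i) v'‖ ≤ L * ‖v - v'‖)
    (fStar : Fin n → ℝ) (hfStar : ∀ i, IsGLB (Set.range (f i)) (fStar i))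
    (F : Vec p → ℝ) (hF : ∀ v, F v = (n : ℝ)⁻¹ * ∑ i, f i v)
    (Fstar : ℝ)
    (sigf : ℝ) (hsigf : sigf = Fstar - (n : ℝ)⁻¹ * ∑ i, fStar i)
    -- probability space, initial point and initial stochastic gradients
    {Ω : Type} [MeasurableSpace Ω] (μ : Measure Ω) [IsProbabilityMeasure μ]
    (x0 : Stacked n p) (g0 : Ω → Stacked n p)
    (hg_L2 : ∀ i, MemLp (fun ω => g0 ω i) 2 μ)
    (habc_mean : ∀ i, (∫ ω, g0 ω i ∂μ) = gradient (f i) (x0 i))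
    (habc_var : ∀ i,
      (∫ ω, ‖g0 ω i - gradient (f i) (x0 i)‖ ^ 2 ∂μ) ≤ C * (f i (x0 i) - fStar i) + σ ^ 2)
    -- the initial tracking variable y₀ = (1 − β) g₀
    (y0 : Ω → Stacked n p) (hy0 : ∀ ω, y0 ω = (1 - β) • g0 ω) :
    (∫ ω, fro2 (consErr (y0 ω)) ∂μ) ≤
      (1 - β) ^ 2 *
        (2 * (n : ℝ) * C * (F (rowAvg x0) - Fstar) + 2 * (n : ℝ) * C * sigf
          + (n : ℝ) * σ ^ 2 + 2 * L * (L + C) * fro2 (consErr x0)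
          + 2 * ∑ i, ‖gradient (f i) (rowAvg x0)‖ ^ 2) := by
  set xb := rowAvg x0
  have hsecond (i : Fin n) : ∫ ω, ‖g0 ω i‖ ^ 2 ∂μ ≤
      C * (f i (x0 i) - fStar i) + σ ^ 2 + ‖gradient (f i) (x0 i)‖ ^ 2 := by
    have := integral_norm_sq_eq_integral_norm_sub_sq_add (hg_L2 i)
    rw [habc_mean i] at this
    linarith [habc_var i]
  have hagent (i : Fin n) : ∫ ω, ‖g0 ω i‖ ^ 2 ∂μ ≤ 2 * C * (f i xb - fStar i)
      + 2 * L * (L + C) * ‖x0 i - xb‖ ^ 2 + σ ^ 2 + 2 * ‖gradient (f i) xb‖ ^ 2 := by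
    linarith [hsecond i, mul_sub_add_norm_gradient_sq_le hC hL (hdiff i) (hsmooth i)
      (fun v => (hfStar i).1 ⟨v, rfl⟩) (x0 i) xb]
  have hgap : ∑ i, (f i xb - fStar i) = n * (F xb - Fstar) + n * sigf := by
    rw [Finset.sum_sub_distrib, hF, hsigf]
    linarith [natCast_mul_inv_mul_sum (f · xb), natCast_mul_inv_mul_sum fStar]
  calc ∫ ω, fro2 (consErr (y0 ω)) ∂μ = (1 - β) ^ 2 * ∫ ω, fro2 (consErr (g0 ω)) ∂μ := by
        simp_rw [hy0, consErr_smul, fro2_smul]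
        exact integral_const_mul _ _
    _ ≤ (1 - β) ^ 2 * ∫ ω, fro2 (g0 ω) ∂μ := by
        refine mul_le_mul_of_nonneg_left ?_ (sq_nonneg _)
        exact integral_mono_of_nonneg (ae_of_all _ fun ω => fro2_nonneg _)
          (integrable_fro2 hg_L2) (ae_of_all _ fun ω => fro2_consErr_le _)
    _ = (1 - β) ^ 2 * ∑ i, ∫ ω, ‖g0 ω i‖ ^ 2 ∂μ := by rw [integral_fro2 hg_L2]
    _ ≤ (1 - β) ^ 2 * ∑ i, (2 * C * (f i xb - fStar i)
          + 2 * L * (L + C) * ‖x0 i - xb‖ ^ 2 + σ ^ 2 + 2 * ‖gradient (f i) xb‖ ^ 2) := by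
        gcongr with i
        exact hagent i
    _ = _ := by
        simp only [Finset.sum_add_distrib, ← Finset.mul_sum, hgap, Finset.sum_const,
          Finset.card_univ, Fintype.card_fin, nsmul_eq_mul, fro2, consErr]
        ring

/-- bound on `E[‖Π y₀‖²]` for the initial tracking variable
`y₀ = (1 − β) g₀`, where the initial stochastic gradients satisfy the ABC
condition, independently across agents. -/
theorem initial_tracking_bound (n p : ℕ) (hn : 0 < n) (hp : 0 < p)
    (L C σ β : ℝ) (hL : 0 < L) (hC : 0 ≤ C) (hσ : 0 ≤ σ) (hβ0 : 0 < β) (hβ1 : β < 1)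
    -- objective functions
    (f : Fin n → Vec p → ℝ)
    (hdiff : ∀ i, Differentiable ℝ (f i))
    (hsmooth : ∀ i v v', ‖gradient (f i) v - gradient (f i) v'‖ ≤ L * ‖v - v'‖)
    (fStar : Fin n → ℝ) (hfStar : ∀ i, IsGLB (Set.range (f i)) (fStar i))
    (F : Vec p → ℝ) (hF : ∀ v, F v = (n : ℝ)⁻¹ * ∑ i, f i v)
    (Fstar : ℝ) (hFstar : IsGLB (Set.range F) Fstar)
    (sigf : ℝ) (hsigf : sigf = Fstar - (n : ℝ)⁻¹ * ∑ i, fStar i)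
    -- probability space, initial point and initial stochastic gradients
    {Ω : Type} [MeasurableSpace Ω] (μ : Measure Ω) [IsProbabilityMeasure μ]
    (x0 : Stacked n p) (g0 : Ω → Stacked n p)
    (hg_L2 : ∀ i, MemLp (fun ω => g0 ω i) 2 μ)
    (habc_mean : ∀ i, (∫ ω, g0 ω i ∂μ) = gradient (f i) (x0 i))
    (habc_var : ∀ i,
      (∫ ω, ‖g0 ω i - gradient (f i) (x0 i)‖ ^ 2 ∂μ) ≤ C * (f i (x0 i) - fStar i) + σ ^ 2)
    (hindep : iIndepFun (fun i ω => g0 ω i) μ)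
    -- the initial tracking variable y₀ = (1 − β) g₀
    (y0 : Ω → Stacked n p) (hy0 : ∀ ω, y0 ω = (1 - β) • g0 ω) :
    (∫ ω, fro2 (consErr (y0 ω)) ∂μ) ≤
      (1 - β) ^ 2 *
        (2 * (n : ℝ) * C * (F (rowAvg x0) - Fstar) + 2 * (n : ℝ) * C * sigf
          + (n : ℝ) * σ ^ 2 + 2 * L * (L + C) * fro2 (consErr x0)
          + 2 * ∑ i, ‖gradient (f i) (rowAvg x0)‖ ^ 2) :=
  initial_tracking_bound_general n p L C σ β hL hC f hdiff hsmooth fStar hfStar F hF Fstar sigf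
    hsigf μ x0 g0 hg_L2 habc_mean habc_var y0 hy0
end
end
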